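/- For real numbers q > 1, δ > 0 with 1 - qδ > 0, and any α ∈ [-δ/2, 0], it holds that (1+α)^q / (1+qα) ≤ exp(q(q-1)α²/(2(1-qδ))). -/

import Mathlib

/-! Taking logarithms, the claim is `q log (1 + α) - log (1 + q α) ≤ C α²` with
`C = q (q - 1) / (2 (1 - q δ))`. The left side vanishes at `0` and has derivative
`q (q - 1) x / ((1 + x) (1 + q x))`. For `q ≥ 1` the denominator increases on `[a, 0]` once
`1 + q a > 0`, so there it is at least its value at `a = -δ/2`, which is at least `1 - q δ`.
Hence on `[α, 0]` the derivative dominates that of `C x²`, and comparing at `α` and `0` gives the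
bound. -/

open Real Set

theorem hasDerivAt_mul_log_one_add_sub_log_one_add_mul {q x : ℝ} (hx : 0 < 1 + x)
    (hqx : 0 < 1 + q * x) :
    HasDerivAt (fun y => q * log (1 + y) - log (1 + q * y))
      (q * (q - 1) * x / ((1 + x) * (1 + q * x))) x := by
  have hlog : HasDerivAt (fun y => log (1 + y)) (1 / (1 + x)) x := by
    simpa using ((hasDerivAt_id x).const_add 1).log hx.ne'
  have hlog_mul : HasDerivAt (fun y => log (1 + q * y)) (q / (1 + q * x)) x := by
    simpa using (((hasDerivAt_id x).const_mul q).const_add 1).log hqx.ne'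
  refine ((hlog.const_mul q).sub hlog_mul).congr_deriv ?_
  field_simp
  ring

theorem one_add_mul_one_add_mul_le_of_le {q a x : ℝ} (hq : 1 ≤ q) (ha : 0 < 1 + q * a)
    (hax : a ≤ x) : (1 + a) * (1 + q * a) ≤ (1 + x) * (1 + q * x) := by
  nlinarith [mul_le_mul_of_nonneg_left hax (by linarith : (0 : ℝ) ≤ q)]

theorem mul_log_one_add_sub_log_one_add_mul_le {q a α : ℝ} (hq : 1 ≤ q) (ha : 0 < 1 + q * a)
    (haα : a ≤ α) (hα : α ≤ 0) :
    q * log (1 + α) - log (1 + q * α) ≤ q * (q - 1) * α ^ 2 / (2 * ((1 + a) * (1 + q * a))) := by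
  set m := (1 + a) * (1 + q * a)
  have hpos : ∀ x ∈ Icc a 0, 0 < 1 + x ∧ 0 < 1 + q * x := fun x hx => by
    constructor <;> nlinarith [hx.1, hx.2]
  have hm : 0 < m := mul_pos (hpos a ⟨le_rfl, haα.trans hα⟩).1 ha
  have hderiv : ∀ x ∈ Icc a 0, HasDerivAt
      (fun y => q * (q - 1) * y ^ 2 / (2 * m) - (q * log (1 + y) - log (1 + q * y)))
      (q * (q - 1) * x * (1 / m - 1 / ((1 + x) * (1 + q * x)))) x := fun x hx => by
    refine (((hasDerivAt_pow 2 x).const_mul (q * (q - 1)) |>.div_const (2 * m)).sub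
      (hasDerivAt_mul_log_one_add_sub_log_one_add_mul (hpos x hx).1 (hpos x hx).2)).congr_deriv ?_
    field_simp
    ring
  have hanti : AntitoneOn
      (fun y => q * (q - 1) * y ^ 2 / (2 * m) - (q * log (1 + y) - log (1 + q * y))) (Icc a 0) := by
    refine antitoneOn_of_hasDerivWithinAt_nonpos (convex_Icc a 0)
      (f' := fun x => q * (q - 1) * x * (1 / m - 1 / ((1 + x) * (1 + q * x))))
      (HasDerivAt.continuousOn hderiv) (fun x hx => ?_) (fun x hx => ?_)
    · exact (hderiv x (interior_subset hx)).hasDerivWithinAt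
    · rw [interior_Icc] at hx
      have hmx : 1 / ((1 + x) * (1 + q * x)) ≤ 1 / m :=
        one_div_le_one_div_of_le hm (one_add_mul_one_add_mul_le_of_le hq ha hx.1.le)
      exact mul_nonpos_of_nonpos_of_nonneg
        (mul_nonpos_of_nonneg_of_nonpos (by nlinarith) hx.2.le) (sub_nonneg.2 hmx)
  have := hanti ⟨haα, hα⟩ ⟨haα.trans hα, le_rfl⟩ hα
  simp only [ne_eq, OfNat.ofNat_ne_zero, not_false_eq_true, zero_pow, mul_zero, zero_div,
    add_zero, log_one, sub_self] at this
  linarith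

theorem stmt1_general (q δ α : ℝ) (hq : 1 < q) (h1 : 0 < 1 - q * δ)
    (hα₁ : -δ / 2 ≤ α) (hα₂ : α ≤ 0) :
    (1 + α) ^ q / (1 + q * α) ≤ Real.exp (q * (q - 1) * α ^ 2 / (2 * (1 - q * δ))) := by
  have hδ : 0 ≤ δ := by linarith
  have ha : 0 < 1 + q * (-δ / 2) := by nlinarith
  have hα : 0 < 1 + α := by nlinarith
  have hqα : 0 < 1 + q * α := by nlinarith
  have hm : 1 - q * δ ≤ (1 + -δ / 2) * (1 + q * (-δ / 2)) := by nlinarith [mul_nonneg hδ hδ]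
  rw [← log_le_iff_le_exp (by positivity), log_div (by positivity) hqα.ne', log_rpow hα]
  calc q * log (1 + α) - log (1 + q * α)
      ≤ q * (q - 1) * α ^ 2 / (2 * ((1 + -δ / 2) * (1 + q * (-δ / 2)))) :=
        mul_log_one_add_sub_log_one_add_mul_le hq.le ha hα₁ hα₂
    _ ≤ q * (q - 1) * α ^ 2 / (2 * (1 - q * δ)) := by
        gcongr

theorem stmt1 (q δ α : ℝ) (hq : 1 < q) (hδ : 0 < δ) (h1 : 0 < 1 - q * δ)
    (hα₁ : -δ / 2 ≤ α) (hα₂ : α ≤ 0) :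
    (1 + α) ^ q / (1 + q * α) ≤ Real.exp (q * (q - 1) * α ^ 2 / (2 * (1 - q * δ))) :=
  stmt1_general q δ α hq h1 hα₁ hα₂
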